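/- arXiv:1303.0930 — 5 statements merged into one kernel-verified Lean document; each statement's English description precedes it below -/
import Mathlib

section
/- Let F be a field, D an m×p matrix over F and G' a k×r matrix over F. The linear map Φ : F^{p×k} → F^{m×k} × F^{p×r} defined by Φ(A) = (D·A, A·G') has rank equal to rank(D)·k + (p − rank(D))·rank(G'). -/
/-! A matrix `A` lies in the kernel of `Φ` iff it kills the column space of `G'` and takes values
in `ker D`, i.e. iff it factors as `F^k → F^k ⧸ range G' → ker D ↪ F^p`. Hence
`dim ker Φ = (k - rank G') * (p - rank D)`, and rank–nullity gives the formula. -/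

namespace LinearMap

variable {K X Y Z U : Type*} [Field K]
  [AddCommGroup X] [Module K X] [AddCommGroup Y] [Module K Y]
  [AddCommGroup Z] [Module K Z] [AddCommGroup U] [Module K U]
  (f : Y →ₗ[K] Z) (g : U →ₗ[K] X)

def compLeftRight : (X →ₗ[K] Y) →ₗ[K] (X →ₗ[K] Z) × (U →ₗ[K] Y) :=
  (compRight K f).prod (lcomp K Y g)

@[simp]
theorem compLeftRight_apply (A : X →ₗ[K] Y) : compLeftRight f g A = (f ∘ₗ A, A ∘ₗ g) := rfl

def ofQuotientRangeToKer : ((X ⧸ range g) →ₗ[K] ker f) →ₗ[K] X →ₗ[K] Y :=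
  lcomp K Y (range g).mkQ ∘ₗ compRight K (ker f).subtype

@[simp]
theorem ofQuotientRangeToKer_apply (χ : (X ⧸ range g) →ₗ[K] ker f) :
    ofQuotientRangeToKer f g χ = (ker f).subtype ∘ₗ χ ∘ₗ (range g).mkQ := rfl

theorem ofQuotientRangeToKer_injective : Function.Injective (ofQuotientRangeToKer f g) :=
  fun _ _ h ↦ Submodule.linearMap_qext _ (ext fun x ↦ Subtype.ext congr($h x))

theorem range_ofQuotientRangeToKer :
    range (ofQuotientRangeToKer f g) = ker (compLeftRight f g) := by
  apply le_antisymm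
  · rintro _ ⟨χ, rfl⟩
    simp only [mem_ker, compLeftRight_apply, ofQuotientRangeToKer_apply, Prod.mk_eq_zero]
    constructor
    · ext x
      exact (χ _).2
    · ext u
      simp [(Submodule.Quotient.mk_eq_zero (range g)).2 (mem_range_self g u)]
  · intro A hA
    simp only [mem_ker, compLeftRight_apply, Prod.mk_eq_zero] at hA
    obtain ⟨hfA, hAg⟩ := hA
    have hA_ker : ∀ x, A x ∈ ker f := fun x ↦ congr($hfA x)
    refine ⟨(range g).liftQ (A.codRestrict (ker f) hA_ker) ?_, rfl⟩
    rintro _ ⟨u, rfl⟩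
    exact Subtype.ext congr($hAg u)

theorem finrank_ker_compLeftRight [FiniteDimensional K X] [FiniteDimensional K Y] :
    Module.finrank K (ker (compLeftRight f g)) =
      Module.finrank K (X ⧸ range g) * Module.finrank K (ker f) := by
  rw [← range_ofQuotientRangeToKer, finrank_range_of_inj (ofQuotientRangeToKer_injective f g),
    Module.finrank_linearMap]

theorem finrank_range_compLeftRight [FiniteDimensional K X] [FiniteDimensional K Y] :
    Module.finrank K (range (compLeftRight f g)) =
      Module.finrank K (range f) * Module.finrank K X +
        Module.finrank K (ker f) * Module.finrank K (range g) := by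
  have hΨ := finrank_range_add_finrank_ker (compLeftRight f g)
  have hf := finrank_range_add_finrank_ker f
  have hg := Submodule.finrank_quotient_add_finrank (range g)
  rw [finrank_ker_compLeftRight, Module.finrank_linearMap, ← hf, ← hg] at hΨ
  rw [← hg]
  linear_combination hΨ

end LinearMap

theorem Matrix.finrank_ker_toLin' {m n R : Type*} [Fintype n] [DecidableEq n] [Field R]
    (A : Matrix m n R) :
    Module.finrank R (LinearMap.ker (Matrix.toLin' A)) = Fintype.card n - A.rank := by
  have := LinearMap.finrank_range_add_finrank_ker (Matrix.toLin' A)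
  rw [Module.finrank_fintype_fun_eq_card] at this
  have : A.rank = Module.finrank R (LinearMap.range (Matrix.toLin' A)) := rfl
  omega

/-- The linear map `Φ : F^{p×k} → F^{m×k} × F^{p×r}`,
`Φ(A) = (D·A, A·G')`, has rank `rank(D)·k + (p − rank(D))·rank(G')`. -/
theorem stmt_1 {m p k r : ℕ} {F : Type*} [Field F]
    (D : Matrix (Fin m) (Fin p) F) (G' : Matrix (Fin k) (Fin r) F)
    (Φ : Matrix (Fin p) (Fin k) F →ₗ[F]
      Matrix (Fin m) (Fin k) F × Matrix (Fin p) (Fin r) F)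
    (hΦ : ∀ A : Matrix (Fin p) (Fin k) F, Φ A = (D * A, A * G')) :
    Module.finrank F (LinearMap.range Φ) = D.rank * k + (p - D.rank) * G'.rank := by
  have hΦ_conj : Φ = ((Matrix.toLin'.prodCongr Matrix.toLin').symm : _ ≃ₗ[F] _).toLinearMap ∘ₗ
      (Matrix.toLin' D).compLeftRight (Matrix.toLin' G') ∘ₗ Matrix.toLin'.toLinearMap := by
    ext1 A
    simp [hΦ, ← Matrix.toLin'_mul]
  rw [hΦ_conj, LinearMap.range_comp, LinearMap.range_comp_of_range_eq_top _ (LinearEquiv.range _),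
    LinearEquiv.finrank_map_eq, LinearMap.finrank_range_compLeftRight, D.finrank_ker_toLin',
    Module.finrank_fin_fun, Fintype.card_fin]
  rfl
end

section
/- Let F be a field, D an m×p matrix over F and G' a k×r matrix over F. Let v ∈ F^p be a row vector that does not lie in the row space of D, and let w ∈ F^k be a column vector that does not lie in the column space of G'. Then the linear map from T = {A ∈ F^{p×k} : D·A = 0 and A·G' = 0} to F sending A to v·A·w is surjective. -/
/-!
The witness is a scaled rank-one matrix `y • a bᵀ`. Since `v` is not in the row space of `D`,
some functional kills every row of `D` but not `v`; represented by a dot product it gives `a` with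
`D a = 0` and `v · a = 1`. Dually `w` yields `b` with `bᵀ G' = 0` and `w · b = 1`, and then
`v (y • a bᵀ) w = y`.
-/

open Matrix

theorem Matrix.exists_mulVec_eq_zero_dotProduct_eq_one {ι n F : Type*} [Field F] [Fintype n]
    (D : Matrix ι n F) {v : n → F} (hv : v ∉ Submodule.span F (Set.range D)) :
    ∃ a : n → F, D *ᵥ a = 0 ∧ v ⬝ᵥ a = 1 := by
  classical
  obtain ⟨f, hfv, hf⟩ := Submodule.exists_dual_map_eq_bot_of_notMem hv inferInstance
  have hf_eq : ∀ x, f x = x ⬝ᵥ (dotProductEquiv F n).symm f := fun x => by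
    conv_lhs => rw [← (dotProductEquiv F n).apply_symm_apply f]
    exact dotProduct_comm _ _
  have hf_rows : ∀ i, f (D i) = 0 := fun i =>
    LinearMap.le_ker_iff_map.mpr hf (Submodule.subset_span ⟨i, rfl⟩)
  refine ⟨(f v)⁻¹ • (dotProductEquiv F n).symm f, ?_, ?_⟩
  · ext i
    rw [mulVec_smul, Pi.smul_apply, mulVec, ← hf_eq, hf_rows, smul_zero, Pi.zero_apply]
  · rw [dotProduct_smul, ← hf_eq, smul_eq_mul, inv_mul_cancel₀ hfv]

/-- if the row vector `v` is not in the row space of `D` and the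
column vector `w` is not in the column space of `G'`, then the map
`A ↦ v·A·w` from `T = {A : D·A = 0, A·G' = 0}` to `F` is surjective. -/
theorem stmt_3 {m p k r : ℕ} {F : Type*} [Field F]
    (D : Matrix (Fin m) (Fin p) F) (G' : Matrix (Fin k) (Fin r) F)
    (v : Fin p → F) (hv : v ∉ Submodule.span F (Set.range fun i : Fin m => D i))
    (w : Fin k → F)
    (hw : w ∉ Submodule.span F (Set.range fun j : Fin r => G'.transpose j)) :
    ∀ y : F, ∃ A : Matrix (Fin p) (Fin k) F,
      D * A = 0 ∧ A * G' = 0 ∧ dotProduct v (A.mulVec w) = y := by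
  intro y
  obtain ⟨a, hDa, hva⟩ := D.exists_mulVec_eq_zero_dotProduct_eq_one hv
  obtain ⟨b, hGb, hwb⟩ := G'ᵀ.exists_mulVec_eq_zero_dotProduct_eq_one hw
  refine ⟨y • vecMulVec a b, ?_, ?_, ?_⟩
  · rw [Matrix.mul_smul, mul_vecMulVec, hDa, zero_vecMulVec, smul_zero]
  · rw [Matrix.smul_mul, vecMulVec_mul, ← mulVec_transpose, hGb]
    ext
    simp [vecMulVec_apply]
  · rw [smul_mulVec, vecMulVec_mulVec, dotProduct_smul, dotProduct_smul, hva, dotProduct_comm, hwb]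
    simp
end

section
/- Let q be a prime power and l a positive integer, let F_q be the finite field with q elements and F_{q^l} its extension of degree l. Let s_1, …, s_M, s ∈ F_{q^l} be M+1 elements that are linearly independent over F_q. Let S_M be the M×(M+1) matrix over F_{q^l} whose i-th row is (1, s_i, s_i^q, …, s_i^{q^{M−1}}), and set v = (1, s, s^q, …, s^{q^{M−1}}) ∈ F_{q^l}^{M+1}. Let C ⊆ F_{q^l}^V be a linear code with generator matrix G (k rows, V columns), let B ⊆ {1,…,V} be a set of size at most d(C⊥) − 2 and let i ∈ {1,…,V} with i ∉ B; let g_i be the i-th column of G and G_B the k×|B| submatrix of G formed by the columns indexed by B. Let H be any matrix of the form H = H'·S_M for some matrix H' over F_{q^l}, fix matrices C0, B0 of the appropriate sizes, and suppose the set S = {A ∈ F_{q^l}^{(M+1)×k} : H·A = C0 and A·G_B = B0} is nonempty. Then for every y ∈ F_{q^l}, the number of A ∈ S with v·A·g_i = y equals |S|/q^l. -/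
/-- The minimum distance of a (set of codewords of a) code: the least Hamming
weight of a nonzero codeword. -/
noncomputable def minDist {V : ℕ} {F : Type*} [Field F] (S : Set (Fin V → F)) : ℕ :=
  sInf {w | ∃ x ∈ S, x ≠ 0 ∧ (Function.support x).ncard = w}

/-- The dual code of a code `C ⊆ F^V`. -/
def dualCode {V : ℕ} {F : Type*} [Field F] (C : Set (Fin V → F)) : Set (Fin V → F) :=
  {x | ∀ c ∈ C, dotProduct x c = 0}

/-!
Since `s_1, …, s_M, s` are `F_q`-independent, the square Moore-type matrix with rows
`(1, x, x^q, …, x^{q^{M-1}})` for `x = s_1, …, s_M, s` is invertible: a vector in its kernel gives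
a `q`-polynomial of degree `< q^M` that is constant on the `x`'s, hence vanishes on the
`M`-dimensional `F_q`-span of their differences, hence is zero. So some `u` has `S_M u = 0` and
`v ⬝ u = 1`. Since `C⊥` has no nonzero word supported on `B ∪ {i}`, some codeword `w G` vanishes on
`B` and is `1` at `i`. Adding `c • u wᵀ` to `A` preserves both constraints and adds `c` to the
label `v A g_i`, so the label splits the solution set into `q^l` fibres of equal size.
-/

open Matrix

theorem Nat.card_fiber_mul_card_eq {R X : Type*} [Ring R] [AddCommGroup X] [Module R X]
    (P : X → Prop) (f : X → R) (D : X) (hP : ∀ A (c : R), P A → P (A + c • D))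
    (hf : ∀ A (c : R), f (A + c • D) = f A + c) (y : R) :
    Nat.card {A // P A ∧ f A = y} * Nat.card R = Nat.card {A // P A} := by
  have shift_cancel : ∀ (A : X) (a b : R), a + b = 0 → A + a • D + b • D = A := fun A a b h => by
    rw [add_assoc, ← add_smul, h, zero_smul, add_zero]
  let e : {A // P A} ≃ {A // P A ∧ f A = y} × R :=
    { toFun := fun A => (⟨A + (y - f A) • D, hP _ _ A.2, by rw [hf]; abel⟩, f A - y)
      invFun := fun A => ⟨A.1.1 + A.2 • D, hP _ _ A.1.2.1⟩
      left_inv := fun A => Subtype.ext (shift_cancel _ _ _ (by rw [sub_add_sub_cancel, sub_self]))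
      right_inv := fun ⟨⟨A, hA, hAy⟩, c⟩ => by
        have hfc : f (A + c • D) = y + c := by rw [hf, hAy]
        ext <;> simp only [hfc]
        · exact shift_cancel _ _ _ (by rw [sub_add_cancel_left, add_neg_cancel])
        · exact add_sub_cancel_left y c }
  rw [← Nat.card_prod, Nat.card_congr e]

open Polynomial in
theorem eq_zero_of_sum_mul_pow_pow_eq_zero {K ι : Type*} [Field K] [Finite ι] {q M : ℕ}
    (hq : 2 ≤ q) (a : Fin M → K) (z : ι → K) (hz : Function.Injective z)
    (hcard : q ^ M ≤ Nat.card ι) (h : ∀ j, ∑ t, a t * z j ^ q ^ (t : ℕ) = 0) : a = 0 := by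
  have : Fintype ι := Fintype.ofFinite ι
  let P : K[X] := ∑ t, C (a t) * X ^ q ^ (t : ℕ)
  have hdeg : P.natDegree < q ^ M := by
    have hpos : 0 < q ^ M := by positivity
    refine lt_of_le_of_lt (natDegree_sum_le_of_forall_le Finset.univ
      (fun t => C (a t) * X ^ q ^ (t : ℕ)) fun t _ => ?_) (Nat.sub_one_lt hpos.ne')
    exact (natDegree_C_mul_X_pow_le _ _).trans
      (Nat.le_sub_one_of_lt (Nat.pow_lt_pow_right hq t.isLt))
  have hP : P = 0 := eq_zero_of_natDegree_lt_card_of_eval_eq_zero P hz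
    (fun j => by simpa [P, eval_finsetSum] using h j)
    (by rw [← Nat.card_eq_fintype_card]; omega)
  funext t
  have hinj : Function.Injective fun t : Fin M => q ^ (t : ℕ) :=
    fun a b hab => Fin.ext (Nat.pow_right_injective hq hab)
  have := congrArg (coeff · (q ^ (t : ℕ))) hP
  simpa [P, finsetSum_coeff, coeff_C_mul, coeff_X_pow, hinj.eq_iff, eq_comm] using this

def affineMooreRow {K : Type*} [Monoid K] (M q : ℕ) (z : K) : Fin (M + 1) → K :=
  Fin.cons 1 fun t : Fin M => z ^ q ^ (t : ℕ)

theorem affineMooreRow_apply {K : Type*} [Monoid K] (M q : ℕ) (z : K) (j : Fin (M + 1)) :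
    affineMooreRow M q z j = if (j : ℕ) = 0 then 1 else z ^ q ^ ((j : ℕ) - 1) := by
  refine Fin.cases ?_ (fun t => ?_) j <;> simp [affineMooreRow]

section Moore

variable (F : Type*) {K : Type*} [Field F] [Fintype F] [Field K] [Algebra F K] {M : ℕ}

def linearizedMap (a : Fin M → K) : K →ₗ[F] K :=
  ∑ t, LinearMap.mulLeft F (a t) ∘ₗ (FiniteField.frobeniusAlgHom F K ^ (t : ℕ)).toLinearMap

theorem linearizedMap_apply (a : Fin M → K) (z : K) :
    linearizedMap F a z = ∑ t, a t * z ^ Fintype.card F ^ (t : ℕ) := by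
  simp [linearizedMap, AlgHom.coe_pow, FiniteField.coe_frobeniusAlgHom, pow_iterate]

theorem affineMooreRow_dotProduct (z : K) (u : Fin (M + 1) → K) :
    affineMooreRow M (Fintype.card F) z ⬝ᵥ u = u 0 + linearizedMap F (Fin.tail u) z := by
  rw [affineMooreRow, ← vecCons, cons_dotProduct, linearizedMap_apply, one_mul, dotProduct]
  simp only [vecHead, vecTail, Fin.tail, Function.comp_apply, mul_comm]

variable {F}

theorem eq_zero_of_forall_affineMooreRow_dotProduct_eq_zero {x : Fin (M + 1) → K}
    (hx : LinearIndependent F x) {u : Fin (M + 1) → K}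
    (hu : ∀ i, affineMooreRow M (Fintype.card F) (x i) ⬝ᵥ u = 0) : u = 0 := by
  set f := linearizedMap F (Fin.tail u)
  have hfx : ∀ i, f (x i) = -u 0 := fun i =>
    eq_neg_of_add_eq_zero_right ((affineMooreRow_dotProduct F _ u).symm.trans (hu i))
  let y : {i // i ≠ Fin.last M} → K := fun i => x i - x (Fin.last M)
  have hy : LinearIndependent F y :=
    (affineIndependent_iff_linearIndependent_vsub F x _).1 hx.affineIndependent
  let W := Submodule.span F (Set.range y)
  have hfW : W ≤ LinearMap.ker f :=
    Submodule.span_le.2 (Set.range_subset_iff.2 fun i => by simp [y, hfx])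
  have : Module.Finite F W := Module.Finite.span_of_finite F (Set.finite_range y)
  have : Finite W := Module.finite_of_finite F
  have hcardW : Nat.card W = Fintype.card F ^ M := by
    rw [Module.natCard_eq_pow_finrank (K := F), finrank_span_eq_card hy, Nat.card_eq_fintype_card]
    simp
  have htail : Fin.tail u = 0 :=
    eq_zero_of_sum_mul_pow_pow_eq_zero Fintype.one_lt_card _ W.subtype Subtype.val_injective
      hcardW.ge fun w => by rw [← linearizedMap_apply]; exact hfW w.2
  have hu0 : u 0 = 0 := by simpa [f, htail, linearizedMap_apply] using hfx 0
  funext j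
  exact Fin.cases hu0 (fun t => congrFun htail t) j

theorem exists_affineMooreRow_dotProduct_eq {σ : Fin M → K} {s : K}
    (hind : LinearIndependent F (Fin.snoc σ s : Fin (M + 1) → K)) :
    ∃ u, (∀ i, affineMooreRow M (Fintype.card F) (σ i) ⬝ᵥ u = 0) ∧
      affineMooreRow M (Fintype.card F) s ⬝ᵥ u = 1 := by
  let T : Matrix (Fin (M + 1)) (Fin (M + 1)) K :=
    of fun i => affineMooreRow M (Fintype.card F) ((Fin.snoc σ s : Fin (M + 1) → K) i)
  have hT : IsUnit T := by
    rw [isUnit_iff_isUnit_det, isUnit_iff_ne_zero, Ne, ← exists_mulVec_eq_zero_iff]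
    rintro ⟨u, hu0, hu⟩
    exact hu0 (eq_zero_of_forall_affineMooreRow_dotProduct_eq_zero hind fun i => congrFun hu i)
  obtain ⟨u, hu⟩ := mulVec_surjective_iff_isUnit.2 hT (Pi.single (Fin.last M) 1)
  refine ⟨u, fun i => ?_, ?_⟩
  · simpa [T, mulVec, (Fin.castSucc_lt_last i).ne] using congrFun hu i.castSucc
  · simpa [T, mulVec] using congrFun hu (Fin.last M)

end Moore

section Code

variable {K : Type*} [Field K] {V : ℕ} {C : Submodule K (Fin V → K)} {B : Finset (Fin V)}
  {i : Fin V}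

theorem exists_mem_dualCode_support_subset (hi : i ∉ B)
    (hC : ∀ c ∈ C, (∀ j ∈ B, c j = 0) → c i = 0) :
    ∃ x ∈ dualCode (C : Set (Fin V → K)), x i = 1 ∧
      Function.support x ⊆ insert i (B : Set (Fin V)) := by
  have hker : ⨅ b : B, LinearMap.ker ((LinearMap.proj (b : Fin V)).comp C.subtype) ≤
      LinearMap.ker ((LinearMap.proj i).comp C.subtype) := by
    intro c hc
    simp only [Submodule.mem_iInf, LinearMap.mem_ker, LinearMap.comp_apply,
      LinearMap.proj_apply, Submodule.coe_subtype] at hc ⊢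
    exact hC c c.2 fun j hj => hc ⟨j, hj⟩
  obtain ⟨lam, hlam⟩ :=
    (Submodule.mem_span_range_iff_exists_fun K).1 (mem_span_of_iInf_ker_le_ker hker)
  have hB : ∀ j ∉ B, ∀ b : B, (Pi.single (b : Fin V) (lam b) : Fin V → K) j = 0 :=
    fun j hj b => Pi.single_eq_of_ne (fun h : j = b => hj (h ▸ b.2)) _
  refine ⟨Pi.single i 1 - ∑ b : B, Pi.single (b : Fin V) (lam b), fun c hc => ?_, ?_, ?_⟩
  · have hc := LinearMap.congr_fun hlam ⟨c, hc⟩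
    simp only [LinearMap.coe_sum, Finset.sum_apply, LinearMap.smul_apply, LinearMap.comp_apply,
      LinearMap.proj_apply, Submodule.coe_subtype, smul_eq_mul] at hc
    simp only [sub_dotProduct, sum_dotProduct, single_dotProduct, one_mul, hc, sub_self]
  · simp [hB i hi]
  · intro j hj
    by_contra hjiB
    simp only [Set.mem_insert_iff, Finset.mem_coe, not_or] at hjiB
    simp only [Pi.sub_apply, Finset.sum_apply, Pi.single_eq_of_ne hjiB.1, hB j hjiB.2,
      Finset.sum_const_zero, sub_zero, Function.mem_support, ne_eq, not_true_eq_false] at hj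

theorem exists_mem_eq_zero_on_and_eq_one (hi : i ∉ B)
    (hB : B.card + 2 ≤ minDist (dualCode (C : Set (Fin V → K)))) :
    ∃ c ∈ C, (∀ j ∈ B, c j = 0) ∧ c i = 1 := by
  by_contra! hne
  have hC : ∀ c ∈ C, (∀ j ∈ B, c j = 0) → c i = 0 := fun c hc hcB => by
    by_contra hci
    refine hne ((c i)⁻¹ • c) (C.smul_mem _ hc) (fun j hj => by simp [hcB j hj]) ?_
    simp [hci]
  obtain ⟨x, hx, hxi, hxB⟩ := exists_mem_dualCode_support_subset hi hC
  have hx0 : x ≠ 0 := fun h => by simp [h] at hxi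
  have : minDist (dualCode (C : Set (Fin V → K))) ≤ B.card + 1 :=
    calc minDist (dualCode (C : Set (Fin V → K))) ≤ (Function.support x).ncard :=
          Nat.sInf_le ⟨x, hx, hx0, rfl⟩
      _ ≤ (insert i (B : Set (Fin V))).ncard := Set.ncard_le_ncard hxB
      _ ≤ B.card + 1 := by simpa using Set.ncard_insert_le i (B : Set (Fin V))
  omega

theorem exists_vecMul_eq_zero_on_and_eq_one {k : ℕ} (G : Matrix (Fin k) (Fin V) K) (hi : i ∉ B)
    (hB : B.card + 2 ≤
      minDist (dualCode (Submodule.span K (Set.range fun t => G t) : Set (Fin V → K)))) :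
    ∃ w, (∀ j ∈ B, (w ᵥ* G) j = 0) ∧ (w ᵥ* G) i = 1 := by
  obtain ⟨c, hcC, hcB, hci⟩ := exists_mem_eq_zero_on_and_eq_one hi hB
  obtain ⟨w, rfl⟩ : ∃ w, w ᵥ* G = c := by
    rw [Submodule.mem_span_range_iff_exists_fun] at hcC
    simpa [vecMul_eq_sum] using hcC
  exact ⟨w, hcB, hci⟩

end Code

theorem stmt_5_general {q l M V k e : ℕ} {F K : Type*} [Field F] [Fintype F] [Field K]
    [Algebra F K] (hq : Fintype.card F = q) (hl : Module.finrank F K = l)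
    (hl0 : 0 < l)
    (σ : Fin M → K) (s : K)
    (hind : LinearIndependent F (Fin.snoc σ s : Fin (M + 1) → K))
    (SM : Matrix (Fin M) (Fin (M + 1)) K)
    (hSM : ∀ (i : Fin M) (j : Fin (M + 1)),
      SM i j = if (j : ℕ) = 0 then 1 else σ i ^ q ^ ((j : ℕ) - 1))
    (v : Fin (M + 1) → K)
    (hv : ∀ j : Fin (M + 1), v j = if (j : ℕ) = 0 then 1 else s ^ q ^ ((j : ℕ) - 1))
    (C : Submodule K (Fin V → K)) (G : Matrix (Fin k) (Fin V) K)
    (hGspan : Submodule.span K (Set.range fun t : Fin k => G t) = C)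
    (B : Finset (Fin V)) (i : Fin V) (hi : i ∉ B)
    (hB : B.card + 2 ≤ minDist (dualCode (C : Set (Fin V → K))))
    (H' : Matrix (Fin e) (Fin M) K)
    (C0 : Matrix (Fin e) (Fin k) K) (B0 : Matrix (Fin (M + 1)) {j // j ∈ B} K)
    (GB : Matrix (Fin k) {j // j ∈ B} K)
    (hGB : ∀ (t : Fin k) (j : {j // j ∈ B}), GB t j = G t j.1) :
    ∀ y : K,
      Nat.card {A : Matrix (Fin (M + 1)) (Fin k) K //
          (H' * SM * A = C0 ∧ A * GB = B0) ∧
            dotProduct v (A.mulVec fun t : Fin k => G t i) = y} * q ^ l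
        = Nat.card {A : Matrix (Fin (M + 1)) (Fin k) K //
            H' * SM * A = C0 ∧ A * GB = B0} := by
  intro y
  have : Module.Finite F K := Module.finite_of_finrank_pos (hl ▸ hl0)
  have hcardK : Nat.card K = q ^ l := by
    rw [Module.natCard_eq_pow_finrank (K := F), Nat.card_eq_fintype_card, hq, hl]
  subst hq
  have hSM' : SM = of fun i => affineMooreRow M (Fintype.card F) (σ i) := by
    ext i j
    rw [hSM, of_apply, affineMooreRow_apply]
  have hv' : v = affineMooreRow M (Fintype.card F) s := funext fun j => by
    rw [hv, affineMooreRow_apply]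
  obtain ⟨u, hSMu, hvu⟩ := exists_affineMooreRow_dotProduct_eq hind
  obtain ⟨w, hwB, hwi⟩ := exists_vecMul_eq_zero_on_and_eq_one G hi (hGspan ▸ hB)
  let D := vecMulVec u w
  have hHD : H' * SM * D = 0 := by
    rw [Matrix.mul_assoc, mul_vecMulVec, show SM *ᵥ u = 0 from hSM' ▸ funext hSMu,
      zero_vecMulVec, Matrix.mul_zero]
  have hDGB : D * GB = 0 := by
    rw [vecMulVec_mul, show w ᵥ* GB = 0 from funext fun b => by
      simpa [vecMul, dotProduct, hGB] using hwB b b.2]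
    ext
    simp [vecMulVec_apply]
  have hDg : v ⬝ᵥ (D *ᵥ fun t => G t i) = 1 := by
    rw [vecMulVec_mulVec, show w ⬝ᵥ (fun t => G t i) = 1 from hwi, MulOpposite.op_one, one_smul,
      hv', hvu]
  rw [← hcardK]
  refine Nat.card_fiber_mul_card_eq _ _ D (fun A c hA => ?_) (fun A c => ?_) y
  · simpa only [Matrix.mul_add, Matrix.add_mul, Matrix.mul_smul, Matrix.smul_mul, hHD, hDGB,
      smul_zero, add_zero] using hA
  · rw [add_mulVec, smul_mulVec, dotProduct_add, dotProduct_smul, hDg, smul_eq_mul, mul_one]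

/-- equidistribution of the label `v·A·g_i` over the solutions of the
coalition's system `H·A = C0`, `A·G_B = B0`, where `H = H'·S_M` for the Moore-type
matrix `S_M` of the `F_q`-linearly independent sent basis `s_1,…,s_M`,
`v = (1, s, s^q, …, s^{q^{M−1}})` for `s` making `s_1,…,s_M,s` linearly independent
over `F_q`, and `B` is a coalition of size `≤ d(C^⊥) − 2` not containing `i`. -/
theorem stmt_5 {q l M V k e : ℕ} {F K : Type*} [Field F] [Fintype F] [Field K]
    [Algebra F K] (hq : Fintype.card F = q) (hl : Module.finrank F K = l)
    (hl0 : 0 < l)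
    (σ : Fin M → K) (s : K)
    (hind : LinearIndependent F (Fin.snoc σ s : Fin (M + 1) → K))
    (SM : Matrix (Fin M) (Fin (M + 1)) K)
    (hSM : ∀ (i : Fin M) (j : Fin (M + 1)),
      SM i j = if (j : ℕ) = 0 then 1 else σ i ^ q ^ ((j : ℕ) - 1))
    (v : Fin (M + 1) → K)
    (hv : ∀ j : Fin (M + 1), v j = if (j : ℕ) = 0 then 1 else s ^ q ^ ((j : ℕ) - 1))
    (C : Submodule K (Fin V → K)) (G : Matrix (Fin k) (Fin V) K)
    (hGind : LinearIndependent K (fun t : Fin k => G t))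
    (hGspan : Submodule.span K (Set.range fun t : Fin k => G t) = C)
    (B : Finset (Fin V)) (i : Fin V) (hi : i ∉ B)
    (hB : B.card + 2 ≤ minDist (dualCode (C : Set (Fin V → K))))
    (H' : Matrix (Fin e) (Fin M) K)
    (C0 : Matrix (Fin e) (Fin k) K) (B0 : Matrix (Fin (M + 1)) {j // j ∈ B} K)
    (GB : Matrix (Fin k) {j // j ∈ B} K)
    (hGB : ∀ (t : Fin k) (j : {j // j ∈ B}), GB t j = G t j.1)
    (hne : ∃ A : Matrix (Fin (M + 1)) (Fin k) K, H' * SM * A = C0 ∧ A * GB = B0) :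
    ∀ y : K,
      Nat.card {A : Matrix (Fin (M + 1)) (Fin k) K //
          (H' * SM * A = C0 ∧ A * GB = B0) ∧
            dotProduct v (A.mulVec fun t : Fin k => G t i) = y} * q ^ l
        = Nat.card {A : Matrix (Fin (M + 1)) (Fin k) K //
            H' * SM * A = C0 ∧ A * GB = B0} :=
  stmt_5_general hq hl hl0 σ s hind SM hSM v hv C G hGspan B i hi hB H' C0 B0 GB hGB
end

section
/- Let C ⊆ F^V be a linear code over a field F with generator matrix G, and fix i ∈ {1,…,V}. Call a set B ⊆ {1,…,V}\{i} qualified for i if the i-th column g_i of G lies in the F-span of the columns {g_j : j ∈ B}. Then the minimal (with respect to inclusion) qualified sets for i are exactly the sets of the form support(x) \ {i}, where x ranges over the codewords of C⊥ that are minimal with respect to i. -/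
/-- A codeword `x` of a code `S` is minimal with respect to the coordinate `i` if
`x_i = 1` and no other codeword of `S` with `i`-th component `1` has support
strictly contained in that of `x`. -/
def IsMinimalWrt {V : ℕ} {F : Type*} [Field F] (S : Set (Fin V → F)) (i : Fin V)
    (x : Fin V → F) : Prop :=
  x ∈ S ∧ x i = 1 ∧
    ∀ x' ∈ S, x' i = 1 → ¬ Function.support x' ⊂ Function.support x

/-! A relation `g_i = ∑_{j ∈ B} c_j g_j` among the columns of `G` is the same thing as the
dual codeword `x = e_i - c`, which has `x_i = 1` and `supp x \ {i} ⊆ B`. So the qualified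
sets for `i` are exactly the supersets of the sets `supp x \ {i}` with `x ∈ C⊥`, `x_i = 1`,
and the minimal ones are those coming from supports that are minimal; deleting `i` from
supports that all contain `i` neither creates nor destroys strict inclusions. -/

open Function Submodule Matrix

theorem Set.sdiff_singleton_subset_sdiff_singleton_iff {α : Type*} {s t : Set α} {a : α}
    (ha : a ∈ t) : s \ {a} ⊆ t \ {a} ↔ s ⊆ t := by
  rw [Set.sdiff_singleton_subset_iff, Set.insert_sdiff_singleton, Set.insert_eq_of_mem ha]

theorem Set.sdiff_singleton_ssubset_sdiff_singleton_iff {α : Type*} {s t : Set α} {a : α}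
    (hs : a ∈ s) (ht : a ∈ t) : s \ {a} ⊂ t \ {a} ↔ s ⊂ t := by
  simp only [Set.ssubset_def, Set.sdiff_singleton_subset_sdiff_singleton_iff hs,
    Set.sdiff_singleton_subset_sdiff_singleton_iff ht]

/-- Hypotheses `hf` and `hQ` say that, inside the down-closed family `R`, the `Q`-sets are
exactly the supersets of the sets `f x` with `P x`. -/
theorem minimal_iff_eq_image_of_minimal {α ι : Type*} {R Q : Set ι → Prop} {P : α → Prop}
    {f : α → Set ι} (hR : ∀ B B', B' ⊆ B → R B → R B') (hf : ∀ x, P x → R (f x) ∧ Q (f x))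
    (hQ : ∀ B, R B → Q B → ∃ x, P x ∧ f x ⊆ B) (B : Set ι) :
    (R B ∧ Q B ∧ ∀ B' ⊂ B, ¬ Q B') ↔ ∃ x, (P x ∧ ∀ x', P x' → ¬ f x' ⊂ f x) ∧ B = f x := by
  constructor
  · rintro ⟨hRB, hQB, hmin⟩
    obtain ⟨x, hx, hxB⟩ := hQ B hRB hQB
    obtain rfl : B = f x := by
      by_contra hne
      exact hmin _ (hxB.ssubset_of_ne (Ne.symm hne)) (hf x hx).2
    exact ⟨x, ⟨hx, fun x' hx' hlt => hmin _ hlt (hf x' hx').2⟩, rfl⟩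
  · rintro ⟨x, ⟨hx, hmin⟩, rfl⟩
    refine ⟨(hf x hx).1, (hf x hx).2, fun B' hB' hQB' => ?_⟩
    obtain ⟨x', hx', hx'B'⟩ := hQ B' (hR _ _ hB'.subset (hf x hx).1) hQB'
    exact hmin x' hx' (hx'B'.trans_ssubset hB')

section Span

variable {ι R M : Type*} [Fintype ι] [Ring R] [AddCommGroup M] [Module R M]
  {v : ι → M} {B : Set ι}

theorem mem_span_image_iff_exists_support_subset {y : M} :
    y ∈ span R (v '' B) ↔ ∃ c : ι → R, support c ⊆ B ∧ ∑ j, c j • v j = y := by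
  rw [Finsupp.mem_span_image_iff_linearCombination]
  constructor
  · rintro ⟨l, hl, rfl⟩
    exact ⟨l, by simpa [Finsupp.mem_supported] using hl,
      by simp [Finsupp.linearCombination_apply, Finsupp.sum_fintype]⟩
  · rintro ⟨c, hc, rfl⟩
    exact ⟨Finsupp.equivFunOnFinite.symm c, by simpa [Finsupp.mem_supported] using hc,
      by simp [Finsupp.linearCombination_apply, Finsupp.sum_fintype]⟩

theorem mem_span_image_iff_exists_dependence [DecidableEq ι] {i : ι} (hi : i ∉ B) :
    v i ∈ span R (v '' B) ↔
      ∃ x : ι → R, ∑ j, x j • v j = 0 ∧ x i = 1 ∧ support x \ {i} ⊆ B := by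
  have sum_single_sub (x : ι → R) :
      ∑ j, (Pi.single i 1 - x : ι → R) j • v j = v i - ∑ j, x j • v j := by
    simp [sub_smul, Finset.sum_sub_distrib, Pi.single_apply, ite_smul]
  rw [mem_span_image_iff_exists_support_subset]
  constructor
  · rintro ⟨c, hcB, hc⟩
    refine ⟨Pi.single i 1 - c, by rw [sum_single_sub, hc, sub_self], ?_, ?_⟩
    · simp [show c i = 0 from notMem_support.mp fun h => hi (hcB h)]
    · rintro j ⟨hj, hji : j ≠ i⟩
      exact hcB fun hcj => hj (by simp [hji, hcj])
  · rintro ⟨x, hx, hxi, hxB⟩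
    refine ⟨Pi.single i 1 - x, fun j hj => ?_, ?_⟩
    · have hji : j ≠ i := by
        rintro rfl
        simp [hxi] at hj
      exact hxB ⟨fun hxj => hj (by simp [hji, hxj]), hji⟩
    · rw [sum_single_sub, hx, sub_zero]

end Span

theorem mem_dualCode_span_iff {V : ℕ} {F : Type*} [Field F] {S : Set (Fin V → F)}
    {x : Fin V → F} : x ∈ dualCode (span F S : Set (Fin V → F)) ↔ ∀ s ∈ S, x ⬝ᵥ s = 0 :=
  ⟨fun h s hs => h s (subset_span hs),
    fun h _ hc => (span_le (p := LinearMap.ker (dotProductBilin F F x))).mpr h hc⟩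

theorem mem_dualCode_iff_sum_smul_cols_eq_zero {V k : ℕ} {F : Type*} [Field F]
    {C : Submodule F (Fin V → F)} {G : Matrix (Fin k) (Fin V) F}
    (hGspan : span F (Set.range fun t : Fin k => G t) = C) {x : Fin V → F} :
    x ∈ dualCode (C : Set (Fin V → F)) ↔ ∑ j, x j • (fun t : Fin k => G t j) = 0 := by
  have sum_smul_cols : ∑ j, x j • (fun t : Fin k => G t j) = G *ᵥ x := by
    ext t
    simp [mulVec, dotProduct, mul_comm]
  rw [sum_smul_cols, ← hGspan, mem_dualCode_span_iff, Set.forall_mem_range, funext_iff]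
  simp [mulVec, dotProduct_comm]

theorem isMinimalWrt_iff {V : ℕ} {F : Type*} [Field F] {S : Set (Fin V → F)} {i : Fin V}
    {x : Fin V → F} :
    IsMinimalWrt S i x ↔ (x ∈ S ∧ x i = 1) ∧
      ∀ x', x' ∈ S ∧ x' i = 1 → ¬ support x' \ {i} ⊂ support x \ {i} := by
  rw [IsMinimalWrt, and_assoc]
  refine and_congr_right fun _ => and_congr_right fun hxi => ?_
  simp only [and_imp]
  refine forall₂_congr fun x' _ => forall_congr' fun hx'i => not_congr ?_
  exact (Set.sdiff_singleton_ssubset_sdiff_singleton_iff (by simp [hx'i]) (by simp [hxi])).symm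

theorem stmt_7_general {V k : ℕ} {F : Type*} [Field F]
    (C : Submodule F (Fin V → F)) (G : Matrix (Fin k) (Fin V) F)
    (hGspan : Submodule.span F (Set.range fun t : Fin k => G t) = C)
    (i : Fin V) :
    ∀ B : Set (Fin V),
      (i ∉ B ∧
        (fun t : Fin k => G t i) ∈
          Submodule.span F ((fun j : Fin V => fun t : Fin k => G t j) '' B) ∧
        ∀ B' : Set (Fin V), B' ⊂ B →
          (fun t : Fin k => G t i) ∉
            Submodule.span F ((fun j : Fin V => fun t : Fin k => G t j) '' B')) ↔
      ∃ x : Fin V → F, IsMinimalWrt (dualCode (C : Set (Fin V → F))) i x ∧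
        B = Function.support x \ {i} := by
  classical
  have qualified_iff (B : Set (Fin V)) (hiB : i ∉ B) :
      (fun t : Fin k => G t i) ∈ span F ((fun j : Fin V => fun t : Fin k => G t j) '' B) ↔
        ∃ x, (x ∈ dualCode (C : Set (Fin V → F)) ∧ x i = 1) ∧ support x \ {i} ⊆ B := by
    simp_rw [mem_span_image_iff_exists_dependence hiB,
      mem_dualCode_iff_sum_smul_cols_eq_zero hGspan, and_assoc]
  simp_rw [isMinimalWrt_iff]
  refine minimal_iff_eq_image_of_minimal (fun B B' hB' hiB h => hiB (hB' h))
    (fun x hx => ⟨by simp, (qualified_iff _ (by simp)).mpr ⟨x, hx, subset_rfl⟩⟩)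
    (fun B hiB hB => (qualified_iff B hiB).mp hB)

/-- the minimal (w.r.t. inclusion) qualified sets for `i` (sets
`B ⊆ {1,…,V}\{i}` such that `g_i` lies in the span of the columns `{g_j : j ∈ B}`)
are exactly the sets `support(x) \ {i}` for `x` a codeword of `C^⊥` minimal with
respect to `i`. -/
theorem stmt_7 {V k : ℕ} {F : Type*} [Field F]
    (C : Submodule F (Fin V → F)) (G : Matrix (Fin k) (Fin V) F)
    (hGind : LinearIndependent F (fun t : Fin k => G t))
    (hGspan : Submodule.span F (Set.range fun t : Fin k => G t) = C)
    (i : Fin V) :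
    ∀ B : Set (Fin V),
      (i ∉ B ∧
        (fun t : Fin k => G t i) ∈
          Submodule.span F ((fun j : Fin V => fun t : Fin k => G t j) '' B) ∧
        ∀ B' : Set (Fin V), B' ⊂ B →
          (fun t : Fin k => G t i) ∉
            Submodule.span F ((fun j : Fin V => fun t : Fin k => G t j) '' B')) ↔
      ∃ x : Fin V → F, IsMinimalWrt (dualCode (C : Set (Fin V → F))) i x ∧
        B = Function.support x \ {i} :=
  stmt_7_general C G hGspan i
end

section
/- Let q be a prime power and l a positive integer, let F_q be the finite field with q elements and F_{q^l} its extension of degree l. Let s_1, …, s_{M+1} ∈ F_{q^l} be linearly independent over F_q. Then the (M+1)×(M+1) matrix over F_{q^l} whose i-th row is (1, s_i, s_i^{q}, s_i^{q^2}, …, s_i^{q^{M−1}}) is invertible. -/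
/-!
If the matrix were singular, a nonzero kernel vector `v` would give a nonzero polynomial
`P = v₀ + ∑ₖ vₖ₊₁ X ^ q ^ k` of degree `< q ^ M` vanishing at every `sᵢ`. Since each
`x ↦ x ^ q ^ k` is `F`-linear, `P` also vanishes at every affine combination `∑ aᵢ sᵢ`
(`∑ aᵢ = 1`), and by linear independence these are `q ^ M` distinct points: too many roots.
-/

open Polynomial Finset Matrix

section MonomialSum

variable {R ι : Type*} [CommRing R] [Fintype ι]

theorem coeff_sum_smul_X_pow {e : ι → ℕ} (he : Function.Injective e) (v : ι → R) (k : ι) :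
    (∑ j, v j • X ^ e j : R[X]).coeff (e k) = v k := by
  classical
  simp [finsetSum_coeff, coeff_X_pow, he.eq_iff]

theorem sum_smul_X_pow_ne_zero {e : ι → ℕ} (he : Function.Injective e) {v : ι → R}
    (hv : v ≠ 0) : (∑ j, v j • X ^ e j : R[X]) ≠ 0 := by
  contrapose! hv
  funext k
  rw [← coeff_sum_smul_X_pow he v k, hv, coeff_zero, Pi.zero_apply]

theorem natDegree_sum_smul_X_pow_le {e : ι → ℕ} {n : ℕ} (he : ∀ j, e j ≤ n)
    (v : ι → R) : (∑ j, v j • X ^ e j : R[X]).natDegree ≤ n :=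
  natDegree_sum_le_of_forall_le _ _ fun j _ =>
    (natDegree_smul_le _ _).trans ((natDegree_X_pow_le _).trans (he j))

theorem Matrix.mulVec_of_pow_apply {ι' : Type*} (x : ι' → R) (e : ι → ℕ) (v : ι → R)
    (i : ι') :
    (of (fun i j => x i ^ e j) *ᵥ v) i = (∑ j, v j • X ^ e j : R[X]).eval (x i) := by
  simp [Matrix.mulVec, dotProduct, eval_finsetSum, mul_comm]

end MonomialSum

theorem Polynomial.card_le_natDegree_of_injective {K α : Type*} [CommRing K] [IsDomain K]
    [Fintype α] {P : K[X]} (hP : P ≠ 0) {f : α → K} (hf : Function.Injective f)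
    (hroot : ∀ a, P.IsRoot (f a)) : Fintype.card α ≤ P.natDegree := by
  classical
  rw [← card_univ, ← card_image_of_injective _ hf]
  refine card_le_degree_of_subset_roots fun x hx => ?_
  obtain ⟨a, -, rfl⟩ := mem_image.mp hx
  exact (mem_roots hP).mpr (hroot a)

/-- Column `j` of the augmented Moore matrix is `s i ^ augmentedMooreExp q j`: the column of
ones, then the Moore columns `s i ^ q ^ k`. -/
def augmentedMooreExp (q : ℕ) : ℕ → ℕ
  | 0 => 0
  | j + 1 => q ^ j

theorem pow_augmentedMooreExp {R : Type*} [Monoid R] (q j : ℕ) (x : R) :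
    x ^ augmentedMooreExp q j = if j = 0 then 1 else x ^ q ^ (j - 1) := by
  cases j <;> simp [augmentedMooreExp]

theorem augmentedMooreExp_injective {q : ℕ} (hq : 1 < q) : (augmentedMooreExp q).Injective := by
  have hpos (k : ℕ) : q ^ k ≠ 0 := by positivity
  rintro (_ | j) (_ | k) h <;>
    simp_all [augmentedMooreExp, (hpos _).symm, (Nat.pow_right_injective hq).eq_iff]

theorem augmentedMooreExp_lt_pow {q j M : ℕ} (hq : 1 < q) (hj : j ≤ M) :
    augmentedMooreExp q j < q ^ M := by
  cases j with
  | zero => exact pow_pos (by omega) M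
  | succ j => exact Nat.pow_lt_pow_right hq hj

noncomputable def augmentedMoorePoly {R : Type*} [CommRing R] (q : ℕ) {N : ℕ}
    (v : Fin N → R) : R[X] :=
  ∑ j : Fin N, v j • X ^ augmentedMooreExp q j

section Frobenius

variable {F K : Type*} [Field F] [Fintype F] [CommRing K] [Algebra F K]

theorem FiniteField.frobeniusAlgHom_pow_apply (m : ℕ) (x : K) :
    (FiniteField.frobeniusAlgHom F K ^ m) x = x ^ Fintype.card F ^ m := by
  rw [AlgHom.coe_pow, FiniteField.coe_frobeniusAlgHom, pow_iterate]

theorem pow_augmentedMooreExp_sum_smul {ι : Type*} [Fintype ι] {a : ι → F}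
    (ha : ∑ i, a i = 1) (s : ι → K) (j : ℕ) :
    (∑ i, a i • s i) ^ augmentedMooreExp (Fintype.card F) j =
      ∑ i, a i • s i ^ augmentedMooreExp (Fintype.card F) j := by
  cases j with
  | zero => simp [augmentedMooreExp, ← sum_smul, ha]
  | succ j =>
    simp only [augmentedMooreExp, ← FiniteField.frobeniusAlgHom_pow_apply, map_sum, map_smul]

theorem eval_augmentedMoorePoly_sum_smul {N : ℕ} (v : Fin N → K) {ι : Type*} [Fintype ι]
    {a : ι → F} (ha : ∑ i, a i = 1) (s : ι → K) :
    (augmentedMoorePoly (Fintype.card F) v).eval (∑ i, a i • s i) =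
      ∑ i, a i • (augmentedMoorePoly (Fintype.card F) v).eval (s i) := by
  simp only [augmentedMoorePoly, eval_finsetSum, eval_smul, eval_pow, eval_X,
    pow_augmentedMooreExp_sum_smul ha, smul_eq_mul, mul_sum, mul_smul_comm, smul_sum]
  exact sum_comm

end Frobenius

theorem LinearIndependent.card_pow_le_natDegree {F K : Type*} [Field F] [Fintype F]
    [CommRing K] [IsDomain K] [Algebra F K] {M : ℕ} {s : Fin (M + 1) → K}
    (hs : LinearIndependent F s) {P : K[X]} (hP : P ≠ 0)
    (hroot : ∀ a : Fin (M + 1) → F, ∑ i, a i = 1 → P.IsRoot (∑ i, a i • s i)) :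
    Fintype.card F ^ M ≤ P.natDegree := by
  have hcomb := linearIndependent_iff_injective_fintypeLinearCombination.mp hs
  let affineWeights (b : Fin M → F) : Fin (M + 1) → F := Fin.cons (1 - ∑ k, b k) b
  have hinj : Function.Injective fun b => ∑ i, affineWeights b i • s i :=
    fun b b' h => (Fin.cons_injective2 (hcomb h)).2
  simpa using card_le_natDegree_of_injective hP hinj fun b =>
    hroot _ (by simp [affineWeights, Fin.sum_cons])

theorem stmt_14_general {q M : ℕ} {F K : Type*} [Field F] [Fintype F] [Field K]
    [Algebra F K] (hq : Fintype.card F = q) (s : Fin (M + 1) → K) (hs : LinearIndependent F s) :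
    IsUnit (Matrix.of fun i j : Fin (M + 1) =>
      if (j : ℕ) = 0 then 1 else s i ^ q ^ ((j : ℕ) - 1)) := by
  subst hq
  have hq : 1 < Fintype.card F := Fintype.one_lt_card
  simp_rw [← pow_augmentedMooreExp]
  rw [isUnit_iff_isUnit_det, isUnit_iff_ne_zero, Ne, ← exists_mulVec_eq_zero_iff]
  rintro ⟨v, hv0, hv⟩
  have hP : augmentedMoorePoly (Fintype.card F) v ≠ 0 :=
    sum_smul_X_pow_ne_zero ((augmentedMooreExp_injective hq).comp Fin.val_injective) hv0
  have hroots (i) : (augmentedMoorePoly (Fintype.card F) v).IsRoot (s i) := by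
    rw [IsRoot, augmentedMoorePoly, ← mulVec_of_pow_apply, hv, Pi.zero_apply]
  have hdeg : (augmentedMoorePoly (Fintype.card F) v).natDegree ≤ Fintype.card F ^ M - 1 :=
    natDegree_sum_smul_X_pow_le (fun j =>
      Nat.le_sub_one_of_lt (augmentedMooreExp_lt_pow hq (Nat.lt_succ_iff.mp j.2))) v
  have hcard := hs.card_pow_le_natDegree hP fun a ha => by
    simp [IsRoot, eval_augmentedMoorePoly_sum_smul v ha, (hroots _).eq_zero]
  have : 0 < Fintype.card F ^ M := by positivity
  omega

/-- for `s_1, …, s_{M+1}` in the degree-`l` extension `K` of the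
finite field `F` with `q` elements, linearly independent over `F`, the
`(M+1)×(M+1)` matrix whose `i`-th row is `(1, s_i, s_i^q, …, s_i^(q^(M−1)))`
is invertible. -/
theorem stmt_14 {q l M : ℕ} {F K : Type*} [Field F] [Fintype F] [Field K]
    [Algebra F K] (hq : Fintype.card F = q) (hl : Module.finrank F K = l)
    (hl0 : 0 < l) (s : Fin (M + 1) → K) (hs : LinearIndependent F s) :
    IsUnit (Matrix.of fun i j : Fin (M + 1) =>
      if (j : ℕ) = 0 then 1 else s i ^ q ^ ((j : ℕ) - 1)) :=
  stmt_14_general hq s hs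
end
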